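/- Assume MA(σ-centered) (equivalently 𝔭 = 2^{ℵ₀}). Let 𝒢 ⊆ Sym(Ω) be strongly independent with |𝒢| < 2^{ℵ₀}, and let M₁ and M₂ be isomorphic inductively flexible relational structures with universe Ω. Then there exists an isomorphism f : M₁ → M₂ such that 𝒢 ∪ {f} is strongly independent. -/

import Mathlib

def StronglyIndependent {Ω : Type} (G : Set (Equiv.Perm Ω)) : Prop :=
  ∀ (n : ℕ) (w : FreeGroup (Fin (n + 1))), w ≠ 1 →
    ∀ f : Fin (n + 1) → Equiv.Perm Ω, Function.Injective f → (∀ i, f i ∈ G) →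
      {x : Ω | FreeGroup.lift f w x = x}.Finite

def FlexibleWitness {Ω : Type} (Aut : Set (Equiv.Perm Ω)) (F : Set (Set (Ω × Ω))) : Prop :=
  (∀ f ∈ F, Set.Finite f) ∧
  (∀ f ∈ F, ∃ g ∈ Aut, ∀ p ∈ f, g p.1 = p.2) ∧
  ∅ ∈ F ∧
  (∀ f ∈ F, Prod.swap '' f ∈ F) ∧
  (∀ f ∈ F, ∀ a : Ω, a ∉ Prod.fst '' f → {b : Ω | insert (a, b) f ∈ F}.Infinite)

/-- A relational structure on universe `Ω` with relation symbols indexed by `I` of arities `ar`. -/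
structure RelStruct (Ω I : Type) (ar : I → ℕ) where
  rel : ∀ i : I, (Fin (ar i) → Ω) → Prop

/-- `g` is an isomorphism from `M` to `N` (both with universe `Ω`), by transport of structure. -/
def IsIso {Ω I : Type} {ar : I → ℕ} (g : Equiv.Perm Ω) (M N : RelStruct Ω I ar) : Prop :=
  ∀ (i : I) (t : Fin (ar i) → Ω), N.rel i (fun k => g (t k)) ↔ M.rel i t

def InductivelyFlexible {Ω I : Type} {ar : I → ℕ} (M : RelStruct Ω I ar) : Prop :=
  ∃ F : Set (Set (Ω × Ω)), FlexibleWitness {g | IsIso g M M} F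

def Centered {P : Type} [Preorder P] (Q : Set P) : Prop :=
  ∀ S : Finset P, ↑S ⊆ Q → ∃ p : P, ∀ q ∈ S, q ≤ p

def SigmaCentered (P : Type) [Preorder P] : Prop :=
  ∃ C : ℕ → Set P, (∀ n, Centered (C n)) ∧ (⋃ n, C n) = Set.univ

/-- Martin's Axiom for σ-centered partial orders: for any nonempty σ-centered partial order
and any family of fewer than continuum many open dense subsets, there is a filter meeting
every member of the family. -/
def MASigmaCentered : Prop :=
  ∀ (P : Type) [Preorder P], Nonempty P → SigmaCentered P →
    ∀ 𝒟 : Set (Set P),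
      (∀ D ∈ 𝒟, (∀ p ∈ D, ∀ q, p ≤ q → q ∈ D) ∧ (∀ p, ∃ q ∈ D, p ≤ q)) →
      Cardinal.mk ↥𝒟 < Cardinal.continuum →
      ∃ Q : Set P, Q.Nonempty ∧
        (∀ q₀ ∈ Q, ∀ q₁ ∈ Q, ∃ q ∈ Q, q₀ ≤ q ∧ q₁ ≤ q) ∧
        (∀ p q : P, p ≤ q → q ∈ Q → p ∈ Q) ∧
        ∀ D ∈ 𝒟, (Q ∩ D).Nonempty

/-!
We force with pairs `(s, W)`: `s` is a finite partial isomorphism `M₁ → M₂` taken from a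
back-and-forth system, and `W` is a finite set of cyclically reduced words in `𝒢 ∪ {f}`, in
which the letter for `f` is read through `s`. A stronger condition may extend `s` and `W`, but
must not give the words of `W` new fixed points. Conditions with the same `s` are compatible, so
the order is σ-centered, and MA gives a filter meeting fewer than `2^ℵ₀` dense sets: its partial
maps glue to an isomorphism `f`, and every cyclically reduced word lies in some `W`, so that it
has no more fixed points under `f` than along a finite `s`. There are finitely many of these:
a word using `s` passes through its finite domain, a word not using it is a word in `𝒢`. Every
word is conjugate to a cyclically reduced one.

The heart of the matter is density. If adding `a ↦ b` to `s` creates a new fixed point of a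
cyclically reduced word, rotate the word so that it starts with the new step: the rest of it
leads from `b` back to `a`, and its first use of the new step shows that `b` is joined to `a`,
or to itself, by a subword evaluated along the old `s`. This excludes only finitely many `b`,
while flexibility offers infinitely many.
-/

open Function
open FreeGroup (lift mk map IsCyclicallyReduced invRev)

theorem List.exists_eq_map_prodMap_some {α β : Type*} {L : List (Option α × β)}
    (h : ∀ b, (none, b) ∉ L) : ∃ v : List (α × β), L = v.map (Prod.map some id) := by
  induction L with
  | nil => exact ⟨[], rfl⟩
  | cons l L ih =>
    obtain ⟨v, rfl⟩ := ih fun b hb => h b (List.mem_cons_of_mem _ hb)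
    obtain ⟨_ | a, b⟩ := l
    · exact absurd List.mem_cons_self (h b)
    · exact ⟨(a, b) :: v, rfl⟩

namespace FreeGroup

theorem lift_map {α β M : Type*} [Group M] (f : β → M) (τ : α → β) (w : FreeGroup α) :
    lift f (map τ w) = lift (f ∘ τ) w := by
  induction w using FreeGroup.induction_on <;> simp_all

theorem exists_map_subtypeVal_eq {α : Type*} [DecidableEq α] {S : Set α} (u : FreeGroup α)
    (hS : ∀ p ∈ u.toWord, p.1 ∈ S) : ∃ w : FreeGroup S, map Subtype.val w = u :=
  ⟨mk (u.toWord.pmap (fun p hp => ((⟨p.1, hp⟩ : S), p.2)) hS), by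
    rw [map.mk, List.map_pmap]
    simp [mk_toWord]⟩

theorem isReduced_append_self_iff {α : Type*} {L : List (α × Bool)} :
    IsReduced (L ++ L) ↔ IsCyclicallyReduced L := by
  simp only [IsReduced, List.isChain_append, isCyclicallyReduced_iff, and_self_left]

theorem IsReduced.invRev {α : Type*} {L : List (α × Bool)} (h : IsReduced L) :
    IsReduced (invRev L) := by
  simp only [FreeGroup.invRev, IsReduced, List.isChain_reverse, List.isChain_map]
  exact h.imp fun p q hpq heq => by simpa using (hpq heq.symm).symm

theorem exists_conj_isCyclicallyReduced {α : Type*} [DecidableEq α] (u : FreeGroup α) :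
    ∃ c r, IsCyclicallyReduced r ∧ u = c * mk r * c⁻¹ := by
  refine ⟨mk (reduceCyclically.conjugator u.toWord), reduceCyclically u.toWord,
    reduceCyclically.isCyclicallyReduced isReduced_toWord, ?_⟩
  rw [inv_mk, mul_mk, mul_mk, reduceCyclically.conj_conjugator_reduceCyclically, mk_toWord]

end FreeGroup

theorem Cardinal.mk_list_lt_continuum {α : Type} (h : Cardinal.mk α < Cardinal.continuum) :
    Cardinal.mk (List α) < Cardinal.continuum :=
  (Cardinal.mk_list_le_max α).trans_lt (max_lt Cardinal.aleph0_lt_continuum h)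

theorem sigmaCentered_of_centered_fibers {P K : Type} [Preorder P] [Nonempty P] [Countable K]
    (key : P → K) (h : ∀ k, Centered {p | key p = k}) : SigmaCentered P := by
  have : Nonempty K := ⟨key (Classical.arbitrary P)⟩
  obtain ⟨e, he⟩ := exists_surjective_nat K
  exact ⟨fun n => {p | key p = e n}, fun n => h (e n), Set.eq_univ_of_forall fun p =>
    Set.mem_iUnion.2 ((he (key p)).imp fun _ hn => hn.symm)⟩

theorem MASigmaCentered.exists_directed_forall_exists_mem (hMA : MASigmaCentered)
    {P ι : Type} [Preorder P] [Nonempty P] (hP : SigmaCentered P) (D : ι → Set P)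
    (hι : Cardinal.mk ι < Cardinal.continuum)
    (hD : ∀ i, (∀ p ∈ D i, ∀ q, p ≤ q → q ∈ D i) ∧ ∀ p, ∃ q, p ≤ q ∧ q ∈ D i) :
    ∃ Q : Set P, Q.Nonempty ∧ (∀ p ∈ Q, ∀ q ∈ Q, ∃ r ∈ Q, p ≤ r ∧ q ≤ r) ∧
      ∀ i, ∃ q ∈ Q, q ∈ D i := by
  obtain ⟨Q, hQne, hQdir, -, hQD⟩ := hMA P inferInstance hP (Set.range D)
    (by
      rintro _ ⟨i, rfl⟩
      exact ⟨(hD i).1, fun p => ((hD i).2 p).imp fun _ h => h.symm⟩)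
    (Cardinal.mk_range_le.trans_lt hι)
  exact ⟨Q, hQne, hQdir, fun i => hQD _ ⟨i, rfl⟩⟩

theorem exists_perm_graph_subset {Ω : Type*} {R : SetRel Ω Ω} (hdom : ∀ x, ∃ y, (x, y) ∈ R)
    (hcod : ∀ y, ∃ x, (x, y) ∈ R) (hR : ∀ p ∈ R, ∀ q ∈ R, p.1 = q.1 ↔ p.2 = q.2) :
    ∃ f : Equiv.Perm Ω, graph f ⊆ R := by
  choose f hf using hdom
  refine ⟨Equiv.ofBijective f ⟨fun x x' h => (hR _ (hf x) _ (hf x')).2 h, fun y => ?_⟩, ?_⟩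
  · obtain ⟨x, hx⟩ := hcod y
    exact ⟨x, (hR _ (hf x) _ hx).1 rfl⟩
  · rintro ⟨x, _⟩ rfl
    exact hf x

def IsStronglyIndependentFamily {ι Ω : Type*} (φ : ι → Equiv.Perm Ω) : Prop :=
  ∀ u : FreeGroup ι, u ≠ 1 → (MulAction.fixedBy Ω (lift φ u)).Finite

section StronglyIndependent

variable {ι κ Ω : Type*} {φ : ι → Equiv.Perm Ω}

theorem IsStronglyIndependentFamily.comp (h : IsStronglyIndependentFamily φ) {σ : κ → ι}
    (hσ : Injective σ) : IsStronglyIndependentFamily (φ ∘ σ) := by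
  intro w hw
  rw [← FreeGroup.lift_map]
  exact h _ ((map_ne_one_iff _ (FreeGroup.map_injective hσ)).2 hw)

theorem IsStronglyIndependentFamily.stronglyIndependent_range {Ω : Type}
    {φ : ι → Equiv.Perm Ω} (h : IsStronglyIndependentFamily φ) :
    StronglyIndependent (Set.range φ) := by
  intro n w hw f hf hfφ
  choose σ hσ using hfφ
  have hσinj : Injective σ := fun i j hij => hf (by rw [← hσ i, ← hσ j, hij])
  rw [← funext hσ]
  exact h.comp hσinj w hw

theorem StronglyIndependent.isStronglyIndependentFamily {Ω : Type} {G : Set (Equiv.Perm Ω)}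
    (h : StronglyIndependent G) :
    IsStronglyIndependentFamily (Subtype.val : G → Equiv.Perm Ω) := by
  classical
  intro u hu
  set S : Set G := {g | ∃ p ∈ u.toWord, p.1 = g}
  have : Finite S := (u.toWord.map Prod.fst).finite_toSet.subset fun g ⟨p, hp, hpg⟩ =>
    List.mem_map.2 ⟨p, hp, hpg⟩
  obtain ⟨p, hp⟩ := List.exists_mem_of_ne_nil _ (FreeGroup.toWord_eq_nil_iff.not.2 hu)
  obtain ⟨n, ⟨e⟩⟩ := Finite.exists_equiv_fin S
  obtain ⟨m, rfl⟩ : ∃ m, n = m + 1 :=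
    Nat.exists_eq_succ_of_ne_zero (by rintro rfl; exact (e ⟨p.1, p, hp, rfl⟩).elim0)
  obtain ⟨w, hwu⟩ := FreeGroup.exists_map_subtypeVal_eq (S := S) u fun p hp => ⟨p, hp, rfl⟩
  have hw : w ≠ 1 := by rintro rfl; exact hu (by rw [← hwu, map_one])
  have hfin : IsStronglyIndependentFamily fun i => ((e.symm i : G) : Equiv.Perm Ω) :=
    fun w hw => h m w hw _
      (Subtype.val_injective.comp (Subtype.val_injective.comp e.symm.injective))
      fun i => (e.symm i : G).2
  rw [← hwu, FreeGroup.lift_map]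
  simpa [comp_def] using hfin.comp e.injective w hw

end StronglyIndependent

namespace PartialWord

variable {G Ω : Type*}

/-- The letter `none` stands for a permutation under construction, of which only the partial
map `s` is known so far. -/
def LetterRel (π : G → Equiv.Perm Ω) (s : SetRel Ω Ω) : Option G × Bool → Ω → Ω → Prop
  | (none, true), x, y => (x, y) ∈ s
  | (none, false), x, y => (y, x) ∈ s
  | (some g, true), x, y => π g x = y
  | (some g, false), x, y => π g y = x

/-- The word `L` is read from right to left, as in `FreeGroup.mk L`. -/
inductive WordRel (π : G → Equiv.Perm Ω) (s : SetRel Ω Ω) :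
    List (Option G × Bool) → Ω → Ω → Prop
  | nil (x : Ω) : WordRel π s [] x x
  | cons {l : Option G × Bool} {L : List (Option G × Bool)} {x y z : Ω} :
      WordRel π s L x y → LetterRel π s l y z → WordRel π s (l :: L) x z

variable {π : G → Equiv.Perm Ω} {s t : SetRel Ω Ω} {f : Equiv.Perm Ω} {l : Option G × Bool}
  {L A B : List (Option G × Bool)} {a b c x y z : Ω}

theorem wordRel_nil_iff : WordRel π s [] x y ↔ x = y :=
  ⟨fun h => by cases h; rfl, fun h => h ▸ .nil x⟩

theorem wordRel_cons_iff :
    WordRel π s (l :: L) x z ↔ ∃ y, WordRel π s L x y ∧ LetterRel π s l y z :=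
  ⟨fun h => by cases h with | cons h₁ h₂ => exact ⟨_, h₁, h₂⟩, fun ⟨_, h₁, h₂⟩ => .cons h₁ h₂⟩

theorem wordRel_singleton_iff : WordRel π s [l] x y ↔ LetterRel π s l x y := by
  simp [wordRel_cons_iff, wordRel_nil_iff]

theorem wordRel_append_iff :
    WordRel π s (A ++ B) x z ↔ ∃ y, WordRel π s B x y ∧ WordRel π s A y z := by
  induction A generalizing z with
  | nil => simp [wordRel_nil_iff]
  | cons l A ih =>
    simp only [List.cons_append, wordRel_cons_iff, ih]
    exact ⟨fun ⟨w, ⟨y, hB, hA⟩, hl⟩ => ⟨y, hB, w, hA, hl⟩,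
      fun ⟨y, hB, w, hA, hl⟩ => ⟨w, ⟨y, hB, hA⟩, hl⟩⟩

theorem LetterRel.mono (hst : s ⊆ t) (h : LetterRel π s l x y) : LetterRel π t l x y := by
  rcases l with ⟨_ | g, _ | _⟩ <;> first | exact hst h | exact h

theorem WordRel.mono (hst : s ⊆ t) (h : WordRel π s L x y) : WordRel π t L x y := by
  induction h with
  | nil x => exact .nil x
  | cons _ hl ih => exact .cons ih (hl.mono hst)

theorem WordRel.exists_finite_subset (h : WordRel π s L x y) :
    ∃ T ⊆ s, T.Finite ∧ WordRel π T L x y := by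
  induction h with
  | nil x => exact ⟨∅, Set.empty_subset _, Set.finite_empty, .nil x⟩
  | @cons l L x y z _ hl ih =>
    obtain ⟨T, hTs, hT, hL⟩ := ih
    refine ⟨T ∪ ({(y, z), (z, y)} ∩ s), Set.union_subset hTs Set.inter_subset_right,
      hT.union ((Set.toFinite _).inter_of_left _),
      .cons (hL.mono Set.subset_union_left) ?_⟩
    rcases l with ⟨_ | g, _ | _⟩
    exacts [Or.inr ⟨Or.inr rfl, hl⟩, Or.inr ⟨Or.inl rfl, hl⟩, hl, hl]

theorem wordRel_graph_iff (f : Equiv.Perm Ω) :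
    WordRel π (graph f) L x y ↔ lift (fun o => o.elim f π) (mk L) x = y := by
  induction L generalizing y with
  | nil => simp [wordRel_nil_iff, ← FreeGroup.one_eq_mk]
  | cons l L ih =>
    rw [wordRel_cons_iff, show mk (l :: L) = mk [l] * mk L from rfl, map_mul,
      Equiv.Perm.mul_apply]
    simp only [ih, exists_eq_left']
    generalize lift (fun o => o.elim f π) (mk L) x = w
    rcases l with ⟨_ | g, _ | _⟩ <;> simp [LetterRel, FreeGroup.lift_mk, Equiv.Perm.inv_def,
      Equiv.symm_apply_eq, eq_comm (a := w)]

theorem WordRel.lift_apply_eq (hs : s ⊆ graph f) (h : WordRel π s L x y) :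
    lift (fun o => o.elim f π) (mk L) x = y :=
  (wordRel_graph_iff f).1 (h.mono hs)

theorem wordRel_map_some_iff (v : List (G × Bool)) :
    WordRel π s (v.map (Prod.map some id)) x y ↔ lift π (mk v) x = y := by
  induction v generalizing y with
  | nil => simp [wordRel_nil_iff, ← FreeGroup.one_eq_mk]
  | cons p v ih =>
    rw [List.map_cons, wordRel_cons_iff, show mk (p :: v) = mk [p] * mk v from rfl, map_mul,
      Equiv.Perm.mul_apply]
    simp only [ih, exists_eq_left']
    generalize lift π (mk v) x = w
    rcases p with ⟨g, _ | _⟩ <;> simp [LetterRel, FreeGroup.lift_mk, Equiv.Perm.inv_def,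
      Equiv.symm_apply_eq, eq_comm (a := w)]

theorem wordRel_invRev_iff : WordRel π s (invRev L) y x ↔ WordRel π s L x y := by
  induction L generalizing y with
  | nil => simp [wordRel_nil_iff, eq_comm]
  | cons l L ih =>
    rw [FreeGroup.invRev_cons, wordRel_append_iff, wordRel_cons_iff]
    refine exists_congr fun m => ?_
    rw [ih, show invRev [l] = [(l.1, !l.2)] from rfl, wordRel_singleton_iff, and_comm]
    rcases l with ⟨_ | g, _ | _⟩ <;> rfl

theorem finite_setOf_wordRel_left (hs : s ⊆ graph f) (L : List (Option G × Bool)) (y : Ω) :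
    {x | WordRel π s L x y}.Finite :=
  Set.Subsingleton.finite fun _ h₁ _ h₂ => (lift (fun o : Option G => o.elim f π) (mk L)).injective
    ((h₁.lift_apply_eq hs).trans (h₂.lift_apply_eq hs).symm)

theorem finite_setOf_wordRel_right (hs : s ⊆ graph f) (L : List (Option G × Bool)) (x : Ω) :
    {y | WordRel π s L x y}.Finite :=
  Set.Subsingleton.finite fun _ h₁ _ h₂ => (h₁.lift_apply_eq hs).symm.trans (h₂.lift_apply_eq hs)

theorem finite_setOf_wordRel_of_none_mem (hs_fin : s.Finite) (hs : s ⊆ graph f) {β : Bool}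
    (hL : (none, β) ∈ L) : {x | ∃ y, WordRel π s L x y}.Finite := by
  obtain ⟨A, B, rfl⟩ := List.append_of_mem hL
  refine (((hs_fin.image Prod.fst).union (hs_fin.image Prod.snd)).biUnion
    fun m _ => finite_setOf_wordRel_left (π := π) hs B m).subset ?_
  rintro x ⟨y, hxy⟩
  obtain ⟨z, hxz, -⟩ := wordRel_append_iff.1 hxy
  obtain ⟨m, hxm, hmz⟩ := wordRel_cons_iff.1 hxz
  refine Set.mem_biUnion (x := m) ?_ hxm
  cases β
  exacts [Or.inr ⟨_, hmz, rfl⟩, Or.inl ⟨_, hmz, rfl⟩]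

theorem finite_setOf_wordRel_self (hπ : IsStronglyIndependentFamily π) (hs_fin : s.Finite)
    (hs : s ⊆ graph f) (hL : FreeGroup.IsReduced L) (hne : L ≠ []) :
    {x | WordRel π s L x x}.Finite := by
  classical
  by_cases hnone : ∃ β, (none, β) ∈ L
  · obtain ⟨β, hβ⟩ := hnone
    exact (finite_setOf_wordRel_of_none_mem hs_fin hs hβ).subset fun x hx => ⟨x, hx⟩
  obtain ⟨v, rfl⟩ := List.exists_eq_map_prodMap_some (not_exists.1 hnone)
  have hv : FreeGroup.IsReduced v := by
    simpa only [FreeGroup.IsReduced, List.isChain_map, Prod.map_fst, Prod.map_snd,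
      Option.some_inj, id_eq] using hL
  simp_rw [wordRel_map_some_iff]
  refine hπ _ fun h1 => hne ?_
  have := congrArg FreeGroup.toWord h1
  rw [FreeGroup.toWord_mk, hv.reduce_eq, FreeGroup.toWord_one] at this
  simp [this]

/-- Infixes of `L ++ L` are the subwords of the cyclic word `L`. A point outside this set can be
made the image or the preimage of `c` without creating new fixed points of `L`. -/
def extensionObstruction (π : G → Equiv.Perm Ω) (s : SetRel Ω Ω) (L : List (Option G × Bool))
    (c : Ω) : Set Ω :=
  ⋃ v ∈ {v | v <:+: L ++ L},
    {y | WordRel π s v y c ∨ WordRel π s v c y ∨ (v ≠ [] ∧ WordRel π s v y y)}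

theorem finite_extensionObstruction (hπ : IsStronglyIndependentFamily π) (hs_fin : s.Finite)
    (hs : s ⊆ graph f) (hL : IsCyclicallyReduced L) (c : Ω) :
    (extensionObstruction π s L c).Finite := by
  rw [← FreeGroup.isReduced_append_self_iff] at hL
  refine Set.Finite.biUnion ((L ++ L).sublists.finite_toSet.subset
    fun v hv => List.mem_sublists.2 hv.sublist) fun v hv => ?_
  simp only [Set.ofPred_or]
  refine (finite_setOf_wordRel_left hs v c).union
    ((finite_setOf_wordRel_right hs v c).union ?_)
  rcases eq_or_ne v [] with rfl | hne
  · simp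
  · exact (finite_setOf_wordRel_self hπ hs_fin hs (hL.infix hv) hne).subset fun y hy => hy.2

theorem extensionObstruction_invRev_subset :
    extensionObstruction π s (invRev L) c ⊆ extensionObstruction π s L c := by
  simp only [extensionObstruction, Set.subset_def, Set.mem_iUnion₂, Set.mem_ofPred_eq]
  rintro y ⟨v, hv, hy⟩
  refine ⟨invRev v, ?_, ?_⟩
  · rw [← FreeGroup.invRev_append] at hv
    simpa only [FreeGroup.invRev_invRev] using
      (show invRev v <:+: invRev (invRev (L ++ L)) from (hv.map _).reverse)
  · rcases hy with h | h | ⟨hne, h⟩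
    · exact Or.inr (Or.inl (wordRel_invRev_iff.2 h))
    · exact Or.inl (wordRel_invRev_iff.2 h)
    · refine Or.inr (Or.inr ⟨?_, wordRel_invRev_iff.2 h⟩)
      rwa [ne_eq, ← List.length_eq_zero_iff, FreeGroup.invRev_length, List.length_eq_zero_iff]

theorem wordRel_insert_cases (h : WordRel π (insert (a, b) s) L x y) :
    WordRel π s L x y ∨
    (∃ P R, L = P ++ (none, true) :: R ∧ WordRel π s R x a ∧
      WordRel π (insert (a, b) s) P b y) ∨
    (∃ P R, L = P ++ (none, false) :: R ∧ WordRel π s R x b ∧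
      WordRel π (insert (a, b) s) P a y) := by
  induction h with
  | nil x => exact Or.inl (.nil x)
  | @cons l L x y z _ hl ih =>
    rcases ih with hL | ⟨P, R, rfl, hR, hP⟩ | ⟨P, R, rfl, hR, hP⟩
    · rcases l with ⟨_ | g, _ | _⟩
      · rcases Set.mem_insert_iff.1 hl with h | h
        · obtain ⟨rfl, rfl⟩ := Prod.mk.inj h
          exact Or.inr (Or.inr ⟨[], L, rfl, hL, .nil _⟩)
        · exact Or.inl (.cons hL h)
      · rcases Set.mem_insert_iff.1 hl with h | h
        · obtain ⟨rfl, rfl⟩ := Prod.mk.inj h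
          exact Or.inr (Or.inl ⟨[], L, rfl, hL, .nil _⟩)
        · exact Or.inl (.cons hL h)
      exacts [Or.inl (.cons hL hl), Or.inl (.cons hL hl)]
    · exact Or.inr (Or.inl ⟨l :: P, R, rfl, hR, .cons hP hl⟩)
    · exact Or.inr (Or.inr ⟨l :: P, R, rfl, hR, .cons hP hl⟩)

/-- Rotating the cyclic word so that it starts with the new step `a ↦ b`, the rest of it leads
from `b` back to `a`; the first use of the new step along that way, if any, closes a shorter
`s`-path from `b` to `a` or an `s`-loop at `b`. -/
theorem mem_extensionObstruction_of_forward {P R : List (Option G × Bool)}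
    (hL : FreeGroup.IsReduced (L ++ L)) (hPR : L = P ++ (none, true) :: R)
    (hR : WordRel π (insert (a, b) s) R x a) (hP : WordRel π (insert (a, b) s) P b x) :
    b ∈ extensionObstruction π s L a := by
  have hrot : R ++ P ++ [(none, true)] <:+: L ++ L := ⟨P ++ [(none, true)], R, by simp [hPR]⟩
  have hRP : R ++ P <:+: L ++ L := (List.prefix_append _ _).isInfix.trans hrot
  have hsuffix : ∀ P' l R', R ++ P = P' ++ l :: R' → R' <:+: L ++ L :=
    fun P' l R' h => .trans ⟨P' ++ [l], [], by simp⟩ (h ▸ hRP)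
  have mem : ∀ v, v <:+: L ++ L → WordRel π s v b a ∨ (v ≠ [] ∧ WordRel π s v b b) →
      b ∈ extensionObstruction π s L a :=
    fun v hv h => Set.mem_biUnion hv (h.imp_right Or.inr)
  rcases wordRel_insert_cases (wordRel_append_iff.2 ⟨x, hP, hR⟩) with
    h | ⟨P', R', h, hR', -⟩ | ⟨P', R', h, hR', -⟩
  · exact mem _ hRP (Or.inl h)
  · exact mem R' (hsuffix _ _ _ h) (Or.inl hR')
  · refine mem R' (hsuffix _ _ _ h) (Or.inr ⟨?_, hR'⟩)
    rintro rfl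
    have : FreeGroup.IsReduced ([(none, false), (none, true)] : List (Option G × Bool)) :=
      hL.infix ((List.infix_append P' _ []).trans (by simpa [h] using hrot))
    simp [FreeGroup.IsReduced] at this

theorem WordRel.of_insert_of_snd_notMem (hL : IsCyclicallyReduced L)
    (hb : b ∉ extensionObstruction π s L a) (h : WordRel π (insert (a, b) s) L x x) :
    WordRel π s L x x := by
  rw [← FreeGroup.isReduced_append_self_iff] at hL
  rcases wordRel_insert_cases h with h | ⟨P, R, rfl, hR, hP⟩ | ⟨P, R, rfl, hR, hP⟩
  · exact h
  · exact absurd (mem_extensionObstruction_of_forward hL rfl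
      (hR.mono (Set.subset_insert _ _)) hP) hb
  · -- a backward use of the new step is a forward use in the inverse word
    refine absurd (extensionObstruction_invRev_subset ?_) hb
    refine mem_extensionObstruction_of_forward (x := x)
      (by rw [← FreeGroup.invRev_append]; exact hL.invRev) (by simp [FreeGroup.invRev])
      (wordRel_invRev_iff.2 hP) (wordRel_invRev_iff.2 (hR.mono (Set.subset_insert _ _)))

def flipNone : Option G × Bool → Option G × Bool
  | (none, β) => (none, !β)
  | (some g, β) => (some g, β)

theorem flipNone_involutive : Involutive (flipNone (G := G)) := by
  rintro ⟨_ | g, β⟩ <;> simp [flipNone]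

theorem wordRel_inv_map_flipNone_iff :
    WordRel π s.inv (L.map flipNone) x y ↔ WordRel π s L x y := by
  induction L generalizing y with
  | nil => simp [wordRel_nil_iff]
  | cons l L ih =>
    simp only [List.map_cons, wordRel_cons_iff, ih]
    refine exists_congr fun _ => and_congr_right' ?_
    rcases l with ⟨_ | g, _ | _⟩ <;> rfl

theorem isCyclicallyReduced_map_flipNone (hL : IsCyclicallyReduced L) :
    IsCyclicallyReduced (L.map flipNone) := by
  rw [← FreeGroup.isReduced_append_self_iff, ← List.map_append, FreeGroup.IsReduced,
    List.isChain_map]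
  refine (FreeGroup.isReduced_append_self_iff.2 hL).imp fun p q hpq => ?_
  rcases p with ⟨_ | g, β⟩ <;> rcases q with ⟨_ | g', β'⟩ <;> simp_all [flipNone]

theorem extensionObstruction_inv_map_flipNone_subset :
    extensionObstruction π s.inv (L.map flipNone) c ⊆ extensionObstruction π s L c := by
  simp only [extensionObstruction, Set.subset_def, Set.mem_iUnion₂, Set.mem_ofPred_eq]
  rintro y ⟨v, hv, hy⟩
  have hflip : ∀ y z, WordRel π s (v.map flipNone) y z ↔ WordRel π s.inv v y z := fun y z => by
    rw [← wordRel_inv_map_flipNone_iff, List.map_map, flipNone_involutive.comp_self, List.map_id]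
  refine ⟨v.map flipNone, ?_, ?_⟩
  · simpa [List.map_map, flipNone_involutive.comp_self] using hv.map flipNone
  · simpa only [hflip, ne_eq, List.map_eq_nil_iff] using hy

theorem WordRel.of_insert_of_fst_notMem (hL : IsCyclicallyReduced L)
    (ha : a ∉ extensionObstruction π s L b) (h : WordRel π (insert (a, b) s) L x x) :
    WordRel π s L x x := by
  -- a preimage of `b` under `s` is an image of `b` under `s.inv`
  have hinv : (insert (a, b) s).inv = insert (b, a) s.inv := by
    ext ⟨_, _⟩
    simp [SetRel.inv, and_comm]
  have h' : WordRel π (insert (b, a) s.inv) (L.map flipNone) x x := by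
    rw [← hinv]
    exact wordRel_inv_map_flipNone_iff.2 h
  exact wordRel_inv_map_flipNone_iff.1 (h'.of_insert_of_snd_notMem
    (isCyclicallyReduced_map_flipNone hL)
    fun h => ha (extensionObstruction_inv_map_flipNone_subset h))

end PartialWord

structure IsBackAndForth {Ω : Type*} (A : Set (Equiv.Perm Ω)) (F : Set (SetRel Ω Ω)) : Prop where
  exists_mem_subset_graph : ∀ s ∈ F, ∃ g ∈ A, s ⊆ graph g
  empty_mem : ∅ ∈ F
  forth : ∀ s ∈ F, ∀ a ∉ Prod.fst '' s, {b | insert (a, b) s ∈ F}.Infinite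
  back : ∀ s ∈ F, ∀ b ∉ Prod.snd '' s, {a | insert (a, b) s ∈ F}.Infinite

theorem FlexibleWitness.isBackAndForth {Ω : Type} {A : Set (Equiv.Perm Ω)}
    {F : Set (Set (Ω × Ω))} (h : FlexibleWitness A F) : IsBackAndForth A F := by
  obtain ⟨-, hreal, hempty, hswap, hforth⟩ := h
  refine ⟨fun s hs => (hreal s hs).imp fun g ⟨hgA, hg⟩ => ⟨hgA, fun p hp => hg p hp⟩,
    hempty, hforth, fun s hs b hb => ?_⟩
  refine (hforth _ (hswap s hs) b (by simpa [Set.image_image] using hb)).mono fun a ha => ?_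
  simpa [Set.image_insert_eq, Set.image_image] using hswap _ ha

theorem IsBackAndForth.image_prodMap {Ω : Type*} {A B : Set (Equiv.Perm Ω)}
    {F : Set (SetRel Ω Ω)} (hF : IsBackAndForth A F) (g₀ : Equiv.Perm Ω)
    (hAB : ∀ g ∈ A, g.trans g₀ ∈ B) : IsBackAndForth B (Set.image (Prod.map id g₀) '' F) where
  exists_mem_subset_graph := by
    rintro _ ⟨s, hs, rfl⟩
    obtain ⟨g, hgA, hg⟩ := hF.exists_mem_subset_graph s hs
    refine ⟨g.trans g₀, hAB g hgA, ?_⟩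
    rintro _ ⟨p, hp, rfl⟩
    exact congrArg g₀ (hg hp)
  empty_mem := ⟨∅, hF.empty_mem, Set.image_empty _⟩
  forth := by
    rintro _ ⟨s, hs, rfl⟩ a ha
    refine ((hF.forth s hs a (by simpa [Set.image_image] using ha)).image
      g₀.injective.injOn).mono ?_
    rintro _ ⟨b, hb, rfl⟩
    exact ⟨_, hb, by simp [Set.image_insert_eq]⟩
  back := by
    rintro _ ⟨s, hs, rfl⟩ b hb
    refine (hF.back s hs (g₀.symm b) ?_).mono fun a ha => ⟨_, ha, by simp [Set.image_insert_eq]⟩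
    rintro ⟨p, hp, hpb⟩
    exact hb ⟨_, ⟨p, hp, rfl⟩, by simp [hpb]⟩

namespace GenericPerm

open PartialWord

variable {G Ω : Type} {π : G → Equiv.Perm Ω} {A : Set (Equiv.Perm Ω)} {F : Set (SetRel Ω Ω)}

structure Condition (π : G → Equiv.Perm Ω) (F : Set (SetRel Ω Ω)) where
  s : SetRel Ω Ω
  words : Set (List (Option G × Bool))
  s_mem : s ∈ F
  s_finite : s.Finite
  words_finite : words.Finite
  words_spec : ∀ L ∈ words, L ≠ [] ∧ IsCyclicallyReduced L

instance : Preorder (Condition π F) where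
  le p q := p.s ⊆ q.s ∧ p.words ⊆ q.words ∧
    ∀ L ∈ p.words, ∀ x, WordRel π q.s L x x → WordRel π p.s L x x
  le_refl _ := ⟨subset_rfl, subset_rfl, fun _ _ _ h => h⟩
  le_trans _ _ _ hpq hqr := ⟨hpq.1.trans hqr.1, hpq.2.1.trans hqr.2.1,
    fun L hL x hx => hpq.2.2 L hL x (hqr.2.2 L (hpq.2.1 hL) x hx)⟩

theorem centered_setOf_s_eq [Nonempty (Condition π F)] (s₀ : SetRel Ω Ω) :
    Centered {p : Condition π F | p.s = s₀} := by
  intro S hS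
  rcases S.eq_empty_or_nonempty with rfl | ⟨q₀, hq₀⟩
  · exact ⟨Classical.arbitrary _, by simp⟩
  have hs : ∀ q ∈ S, q.s = q₀.s := fun q hq => (hS hq).trans (hS hq₀).symm
  refine ⟨⟨q₀.s, ⋃ q ∈ S, q.words, q₀.s_mem, q₀.s_finite,
    S.finite_toSet.biUnion fun q _ => q.words_finite, ?_⟩, fun q hq =>
    ⟨(hs q hq).le, Set.subset_biUnion_of_mem (u := Condition.words) hq,
      fun _ _ _ hx => hs q hq ▸ hx⟩⟩
  simp only [Set.mem_iUnion]
  rintro L ⟨q, -, hL⟩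
  exact q.words_spec L hL

theorem sigmaCentered_condition [Countable Ω] [Nonempty (Condition π F)] :
    SigmaCentered (Condition π F) :=
  sigmaCentered_of_centered_fibers (fun p => p.s_finite.toFinset) fun k S hS =>
    centered_setOf_s_eq (k : SetRel Ω Ω) S fun q hq => by
      rw [Set.mem_ofPred_eq, ← hS hq, Set.Finite.coe_toFinset]

theorem Condition.exists_le_fst_mem (hπ : IsStronglyIndependentFamily π)
    (hF : IsBackAndForth A F) (p : Condition π F) (a : Ω) :
    ∃ q, p ≤ q ∧ a ∈ Prod.fst '' q.s := by
  by_cases ha : a ∈ Prod.fst '' p.s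
  · exact ⟨p, le_rfl, ha⟩
  obtain ⟨g, -, hg⟩ := hF.exists_mem_subset_graph p.s p.s_mem
  have hZ : (⋃ L ∈ p.words, extensionObstruction π p.s L a).Finite :=
    p.words_finite.biUnion fun L hL =>
      finite_extensionObstruction hπ p.s_finite hg (p.words_spec L hL).2 a
  obtain ⟨b, hbF, hbZ⟩ := ((hF.forth p.s p.s_mem a ha).sdiff hZ).nonempty
  refine ⟨⟨insert (a, b) p.s, p.words, hbF, p.s_finite.insert _, p.words_finite, p.words_spec⟩,
    ⟨Set.subset_insert _ _, subset_rfl, fun L hL x hx => hx.of_insert_of_snd_notMem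
      (p.words_spec L hL).2 fun h => hbZ (Set.mem_biUnion hL h)⟩,
    (a, b), Set.mem_insert _ _, rfl⟩

theorem Condition.exists_le_snd_mem (hπ : IsStronglyIndependentFamily π)
    (hF : IsBackAndForth A F) (p : Condition π F) (b : Ω) :
    ∃ q, p ≤ q ∧ b ∈ Prod.snd '' q.s := by
  by_cases hb : b ∈ Prod.snd '' p.s
  · exact ⟨p, le_rfl, hb⟩
  obtain ⟨g, -, hg⟩ := hF.exists_mem_subset_graph p.s p.s_mem
  have hZ : (⋃ L ∈ p.words, extensionObstruction π p.s L b).Finite :=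
    p.words_finite.biUnion fun L hL =>
      finite_extensionObstruction hπ p.s_finite hg (p.words_spec L hL).2 b
  obtain ⟨a, haF, haZ⟩ := ((hF.back p.s p.s_mem b hb).sdiff hZ).nonempty
  refine ⟨⟨insert (a, b) p.s, p.words, haF, p.s_finite.insert _, p.words_finite, p.words_spec⟩,
    ⟨Set.subset_insert _ _, subset_rfl, fun L hL x hx => hx.of_insert_of_fst_notMem
      (p.words_spec L hL).2 fun h => haZ (Set.mem_biUnion hL h)⟩,
    (a, b), Set.mem_insert _ _, rfl⟩

theorem Condition.exists_le_mem_words (p : Condition π F) {L : List (Option G × Bool)}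
    (hL : L ≠ [] ∧ IsCyclicallyReduced L) : ∃ q, p ≤ q ∧ L ∈ q.words :=
  ⟨⟨p.s, insert L p.words, p.s_mem, p.s_finite, p.words_finite.insert L, by
      rintro L' (rfl | hL')
      exacts [hL, p.words_spec L' hL']⟩,
    ⟨subset_rfl, Set.subset_insert _ _, fun _ _ _ h => h⟩, Set.mem_insert _ _⟩

structure IsGeneric (Q : Set (Condition π F)) : Prop where
  nonempty : Q.Nonempty
  directed : ∀ p ∈ Q, ∀ q ∈ Q, ∃ r ∈ Q, p ≤ r ∧ q ≤ r
  fst_mem : ∀ a, ∃ q ∈ Q, a ∈ Prod.fst '' q.s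
  snd_mem : ∀ b, ∃ q ∈ Q, b ∈ Prod.snd '' q.s
  words_mem : ∀ L, L ≠ [] ∧ IsCyclicallyReduced L → ∃ q ∈ Q, L ∈ q.words

theorem exists_isGeneric [Countable Ω] (hMA : MASigmaCentered)
    (hπ : IsStronglyIndependentFamily π) (hF : IsBackAndForth A F)
    (hG : Cardinal.mk G < Cardinal.continuum) : ∃ Q : Set (Condition π F), IsGeneric Q := by
  have : Nonempty (Condition π F) :=
    ⟨⟨∅, ∅, hF.empty_mem, Set.finite_empty, Set.finite_empty, by simp⟩⟩
  have hΩ : Cardinal.mk Ω < Cardinal.continuum :=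
    Cardinal.mk_le_aleph0.trans_lt Cardinal.aleph0_lt_continuum
  have hletters : Cardinal.mk (Option G × Bool) < Cardinal.continuum := by
    simp only [Cardinal.mk_prod, Cardinal.mk_option, Cardinal.lift_id, Cardinal.mk_fintype,
      Fintype.card_bool, Nat.cast_ofNat]
    exact Cardinal.mul_lt_of_lt Cardinal.aleph0_le_continuum
      (Cardinal.add_lt_of_lt Cardinal.aleph0_le_continuum hG
        (Cardinal.one_lt_aleph0.trans Cardinal.aleph0_lt_continuum))
      (Cardinal.nat_lt_continuum 2)
  have hwords : Cardinal.mk {L : List (Option G × Bool) // L ≠ [] ∧ IsCyclicallyReduced L} <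
      Cardinal.continuum :=
    (Cardinal.mk_subtype_le _).trans_lt (Cardinal.mk_list_lt_continuum hletters)
  obtain ⟨Q, hQne, hQdir, hQD⟩ := hMA.exists_directed_forall_exists_mem sigmaCentered_condition
    (Sum.elim (fun a => {p | a ∈ Prod.fst '' p.s})
      (Sum.elim (fun b => {p | b ∈ Prod.snd '' p.s})
        fun L : {L // L ≠ [] ∧ IsCyclicallyReduced L} => {p | L.1 ∈ p.words}))
    (by
      simp only [Cardinal.mk_sum, Cardinal.lift_id]
      exact Cardinal.add_lt_of_lt Cardinal.aleph0_le_continuum hΩ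
        (Cardinal.add_lt_of_lt Cardinal.aleph0_le_continuum hΩ hwords))
    (by
      rintro (a | b | L)
      · exact ⟨fun p hp q hpq => Set.image_mono hpq.1 hp, (·.exists_le_fst_mem hπ hF a)⟩
      · exact ⟨fun p hp q hpq => Set.image_mono hpq.1 hp, (·.exists_le_snd_mem hπ hF b)⟩
      · exact ⟨fun p hp q hpq => hpq.2.1 hp, (·.exists_le_mem_words L.2)⟩)
  exact ⟨Q, hQne, hQdir, fun a => hQD (.inl a), fun b => hQD (.inr (.inl b)),
    fun L hL => hQD (.inr (.inr ⟨L, hL⟩))⟩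

namespace IsGeneric

variable {Q : Set (Condition π F)}

theorem exists_mem_subset (hQ : IsGeneric Q) {T : SetRel Ω Ω} (hT : T.Finite)
    (hTQ : T ⊆ ⋃ q ∈ Q, q.s) : ∃ q ∈ Q, T ⊆ q.s := by
  simpa using DirectedOn.exists_mem_subset_of_finset_subset_biUnion (f := Condition.s)
    hQ.nonempty (fun p hp q hq => (hQ.directed p hp q hq).imp fun _ ⟨hr, hpr, hqr⟩ =>
      ⟨hr, hpr.1, hqr.1⟩) (s := hT.toFinset) (by simpa using hTQ)

theorem exists_mem_subset_graph (hQ : IsGeneric Q) (hF : IsBackAndForth A F) {T : SetRel Ω Ω}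
    (hT : T.Finite) (hTQ : T ⊆ ⋃ q ∈ Q, q.s) : ∃ g ∈ A, T ⊆ graph g := by
  obtain ⟨q, hq, hTq⟩ := hQ.exists_mem_subset hT hTQ
  obtain ⟨g, hgA, hg⟩ := hF.exists_mem_subset_graph q.s q.s_mem
  exact ⟨g, hgA, hTq.trans hg⟩

theorem exists_perm (hQ : IsGeneric Q) (hF : IsBackAndForth A F) :
    ∃ f : Equiv.Perm Ω, graph f ⊆ ⋃ q ∈ Q, q.s := by
  refine exists_perm_graph_subset (fun a => ?_) (fun b => ?_) fun p hp p' hp' => ?_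
  · obtain ⟨q, hq, ⟨a, b⟩, hab, rfl⟩ := hQ.fst_mem a
    exact ⟨b, Set.mem_biUnion hq hab⟩
  · obtain ⟨q, hq, ⟨a, b⟩, hab, rfl⟩ := hQ.snd_mem b
    exact ⟨a, Set.mem_biUnion hq hab⟩
  · obtain ⟨g, -, hg⟩ := hQ.exists_mem_subset_graph hF (Set.toFinite {p, p'})
      (Set.insert_subset hp (Set.singleton_subset_iff.2 hp'))
    rw [← hg (Set.mem_insert _ _), ← hg (Set.mem_insert_of_mem _ rfl)]
    exact g.injective.eq_iff.symm

theorem wordRel_of_wordRel_iUnion (hQ : IsGeneric Q) {p : Condition π F} (hp : p ∈ Q)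
    {L : List (Option G × Bool)} (hL : L ∈ p.words) {x : Ω}
    (h : WordRel π (⋃ q ∈ Q, q.s) L x x) : WordRel π p.s L x x := by
  obtain ⟨T, hTR, hT, hTL⟩ := h.exists_finite_subset
  obtain ⟨q, hq, hTq⟩ := hQ.exists_mem_subset hT hTR
  obtain ⟨r, -, hpr, hqr⟩ := hQ.directed p hp q hq
  exact hpr.2.2 L hL x (hTL.mono (hTq.trans hqr.1))

theorem isStronglyIndependentFamily (hQ : IsGeneric Q) (hπ : IsStronglyIndependentFamily π)
    (hF : IsBackAndForth A F) {f : Equiv.Perm Ω} (hf : graph f ⊆ ⋃ q ∈ Q, q.s) :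
    IsStronglyIndependentFamily fun o : Option G => o.elim f π := by
  classical
  intro u hu
  obtain ⟨c, r, hr, rfl⟩ := FreeGroup.exists_conj_isCyclicallyReduced u
  have hr₀ : r ≠ [] := by
    rintro rfl
    exact hu (by simp [← FreeGroup.one_eq_mk])
  obtain ⟨p, hp, hrp⟩ := hQ.words_mem r ⟨hr₀, hr⟩
  obtain ⟨g, -, hg⟩ := hF.exists_mem_subset_graph p.s p.s_mem
  have hfix :
      (MulAction.fixedBy Ω (lift (fun o : Option G => o.elim f π) (FreeGroup.mk r))).Finite :=
    (finite_setOf_wordRel_self hπ p.s_finite hg hr.isReduced hr₀).subset fun x hx =>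
      hQ.wordRel_of_wordRel_iUnion hp hrp (((wordRel_graph_iff f).2 hx).mono hf)
  rw [map_mul, map_mul, map_inv, ← MulAction.smul_fixedBy]
  exact hfix.smul_set

end IsGeneric

theorem exists_mem_isStronglyIndependentFamily [Countable Ω] (hMA : MASigmaCentered)
    (hπ : IsStronglyIndependentFamily π) (hG : Cardinal.mk G < Cardinal.continuum)
    (hA : ∀ f : Equiv.Perm Ω, (∀ T : Set Ω, T.Finite → ∃ g ∈ A, ∀ x ∈ T, g x = f x) → f ∈ A)
    (hF : IsBackAndForth A F) :
    ∃ f ∈ A, IsStronglyIndependentFamily fun o : Option G => o.elim f π := by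
  obtain ⟨Q, hQ⟩ := exists_isGeneric (π := π) hMA hπ hF hG
  obtain ⟨f, hf⟩ := hQ.exists_perm hF
  refine ⟨f, hA f fun T hT => ?_, hQ.isStronglyIndependentFamily hπ hF hf⟩
  obtain ⟨g, hgA, hg⟩ := hQ.exists_mem_subset_graph hF (hT.image fun x => (x, f x))
    (by rintro _ ⟨x, -, rfl⟩; exact hf rfl)
  exact ⟨g, hgA, fun x hx => hg ⟨x, hx, rfl⟩⟩

end GenericPerm

theorem IsIso.trans {Ω I : Type} {ar : I → ℕ} {M₁ M₂ M₃ : RelStruct Ω I ar}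
    {g h : Equiv.Perm Ω} (hg : IsIso g M₁ M₂) (hh : IsIso h M₂ M₃) : IsIso (g.trans h) M₁ M₃ :=
  fun i t => (hh i fun k => g (t k)).trans (hg i t)

theorem isIso_of_forall_finite {Ω I : Type} {ar : I → ℕ} {M N : RelStruct Ω I ar}
    {f : Equiv.Perm Ω} (h : ∀ T : Set Ω, T.Finite → ∃ g, IsIso g M N ∧ ∀ x ∈ T, g x = f x) :
    IsIso f M N := by
  intro i t
  obtain ⟨g, hg, hgf⟩ := h (Set.range t) (Set.finite_range t)
  have : (fun k => f (t k)) = fun k => g (t k) := funext fun k => (hgf _ ⟨k, rfl⟩).symm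
  rw [this]
  exact hg i t

theorem stmt_9_general (hMA : MASigmaCentered) (Ω I : Type) [Countable Ω]
    (ar : I → ℕ) (𝒢 : Set (Equiv.Perm Ω)) (hsi : StronglyIndependent 𝒢)
    (hcard : Cardinal.mk ↥𝒢 < Cardinal.continuum)
    (M₁ M₂ : RelStruct Ω I ar)
    (h1 : InductivelyFlexible M₁)
    (hiso : ∃ g : Equiv.Perm Ω, IsIso g M₁ M₂) :
    ∃ f : Equiv.Perm Ω, IsIso f M₁ M₂ ∧ StronglyIndependent (insert f 𝒢) := by
  obtain ⟨g₀, hg₀⟩ := hiso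
  obtain ⟨F, hF⟩ := h1
  obtain ⟨f, hf, hfam⟩ := GenericPerm.exists_mem_isStronglyIndependentFamily hMA
    hsi.isStronglyIndependentFamily hcard (fun _ => isIso_of_forall_finite)
    (hF.isBackAndForth.image_prodMap g₀ fun _ hg => hg.trans hg₀)
  refine ⟨f, hf, ?_⟩
  simpa [Option.range_elim] using hfam.stronglyIndependent_range

/-- (MA(σ-centered)) If `𝒢 ⊆ Sym(Ω)` is strongly independent of size `< 2^ℵ₀` and `M₁, M₂`
are isomorphic inductively flexible structures with universe `Ω`, then there is an isomorphism
`f : M₁ → M₂` with `𝒢 ∪ {f}` strongly independent. -/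
theorem stmt_9 (hMA : MASigmaCentered) (Ω I : Type) [Countable Ω] [Infinite Ω]
    (ar : I → ℕ) (𝒢 : Set (Equiv.Perm Ω)) (hsi : StronglyIndependent 𝒢)
    (hcard : Cardinal.mk ↥𝒢 < Cardinal.continuum)
    (M₁ M₂ : RelStruct Ω I ar)
    (h1 : InductivelyFlexible M₁) (h2 : InductivelyFlexible M₂)
    (hiso : ∃ g : Equiv.Perm Ω, IsIso g M₁ M₂) :
    ∃ f : Equiv.Perm Ω, IsIso f M₁ M₂ ∧ StronglyIndependent (insert f 𝒢) :=
  stmt_9_general hMA Ω I ar 𝒢 hsi hcard M₁ M₂ h1 hiso
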